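/- arXiv:2508.00775 — 3 statements merged into one kernel-verified Lean document; each statement's English description precedes it below -/
import Mathlib

section
/- If a sequence of nonnegative reals (δ_t) satisfies δ_{t+1} ≤ γ·δ_t + |v_t| for all t, where γ ∈ (0,1) and |v_t| ≤ p(t)·γ^t for a polynomial p of degree m with nonnegative coefficients, then there exists a polynomial r of degree m+1 such that δ_t ≤ r(t)·γ^t for all t. -/
theorem stmt_0 (δ : ℕ → ℝ) (v : ℕ → ℝ) (γ : ℝ) (m : ℕ) (p : Polynomial ℝ)
    (hδ : ∀ t, 0 ≤ δ t) (hγ : γ ∈ Set.Ioo (0:ℝ) 1)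
    (hdeg : p.natDegree ≤ m) (hcoeff : ∀ i, 0 ≤ p.coeff i)
    (hv : ∀ t : ℕ, |v t| ≤ p.eval (t : ℝ) * γ ^ t)
    (hrec : ∀ t : ℕ, δ (t + 1) ≤ γ * δ t + |v t|) :
    ∃ r : Polynomial ℝ, r.natDegree ≤ m + 1 ∧
      ∀ t : ℕ, δ t ≤ r.eval (t : ℝ) * γ ^ t := by
  obtain ⟨hγ0, hγ1⟩ := hγ
  have pmono : ∀ a b : ℝ, 0 ≤ a → a ≤ b → p.eval a ≤ p.eval b := by
    intro a b ha hab
    rw [Polynomial.eval_eq_sum_range, Polynomial.eval_eq_sum_range]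
    apply Finset.sum_le_sum
    intro i _
    exact mul_le_mul_of_nonneg_left (pow_le_pow_left₀ ha hab i) (hcoeff i)
  have ppos : ∀ a : ℝ, 0 ≤ a → 0 ≤ p.eval a := by
    intro a ha
    have := pmono 0 a le_rfl ha
    exact le_trans (hcoeff 0) (by rwa [Polynomial.coeff_zero_eq_eval_zero])
  refine ⟨Polynomial.C (δ 0) + Polynomial.C γ⁻¹ * (Polynomial.X * p), ?_, ?_⟩
  · refine le_trans (Polynomial.natDegree_add_le _ _) ?_
    simp only [Polynomial.natDegree_C, max_le_iff]
    constructor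
    · omega
    · refine le_trans (Polynomial.natDegree_C_mul_le _ _) ?_
      refine le_trans (Polynomial.natDegree_mul_le) ?_
      simp [Polynomial.natDegree_X]; omega
  · intro t
    induction t with
    | zero =>
      simp
    | succ t ih =>
      have h1 := hrec t
      have h2 := hv t
      have h3 : p.eval (t:ℝ) ≤ p.eval ((t:ℝ)+1) :=
        pmono _ _ (Nat.cast_nonneg t) (by linarith)
      have hp0 : 0 ≤ p.eval (t:ℝ) := ppos _ (Nat.cast_nonneg t)
      have hγγ : γ * γ⁻¹ = 1 := mul_inv_cancel₀ hγ0.ne'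
      have hgt : (0:ℝ) < γ ^ t := pow_pos hγ0 t
      have hd0 : 0 ≤ δ 0 := hδ 0
      simp only [Polynomial.eval_add, Polynomial.eval_mul, Polynomial.eval_C,
        Polynomial.eval_X, Nat.cast_succ, pow_succ] at ih ⊢
      have hmul := mul_le_mul_of_nonneg_left ih hγ0.le
      have e1 : γ * ((δ 0 + γ⁻¹ * ((t:ℝ) * p.eval (t:ℝ))) * γ ^ t)
          = δ 0 * (γ ^ t * γ) + (t:ℝ) * p.eval (t:ℝ) * γ ^ t := by
        field_simp
      have e2 : (δ 0 + γ⁻¹ * (((t:ℝ)+1) * p.eval ((t:ℝ)+1))) * (γ ^ t * γ)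
          = δ 0 * (γ ^ t * γ) + ((t:ℝ)+1) * p.eval ((t:ℝ)+1) * γ ^ t := by
        field_simp
      have e3 : ((t:ℝ)+1) * p.eval (t:ℝ) * γ ^ t
          = (t:ℝ) * p.eval (t:ℝ) * γ ^ t + p.eval (t:ℝ) * γ ^ t := by ring
      have h4 : ((t:ℝ)+1) * p.eval (t:ℝ) * γ ^ t ≤ ((t:ℝ)+1) * p.eval ((t:ℝ)+1) * γ ^ t := by
        have : (0:ℝ) ≤ ((t:ℝ)+1) * γ ^ t := by positivity
        nlinarith
      linarith
end

section
/- Let π : X → X on a normed space satisfy dist(π(x), S) ≤ γ·dist(x, S) for all x, where S = Fix(π) is nonempty and γ ∈ (0,1). Suppose the perturbed iteration ξ_{t+1} = π(ξ_t) + v_t has ‖v_t‖ ≤ C·γ^t for some C ≥ 0. Then dist(ξ_t, S) ≤ γ^t·(dist(ξ_0, S) + C·t/γ) for all t ≥ 1. -/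
theorem stmt_5 {X : Type*} [NormedAddCommGroup X] [NormedSpace ℝ X]
    (π : X → X) (S : Set X) (hS : S = {x | π x = x}) (hSne : S.Nonempty)
    (γ C : ℝ) (hγ : γ ∈ Set.Ioo (0:ℝ) 1) (hC : 0 ≤ C)
    (hcontr : ∀ x : X, Metric.infDist (π x) S ≤ γ * Metric.infDist x S)
    (v : ℕ → X) (hv : ∀ t : ℕ, ‖v t‖ ≤ C * γ ^ t)
    (ξ : ℕ → X) (hξ : ∀ t : ℕ, ξ (t + 1) = π (ξ t) + v t) :
    ∀ t : ℕ, 1 ≤ t →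
      Metric.infDist (ξ t) S ≤ γ ^ t * (Metric.infDist (ξ 0) S + C * t / γ) := by
  obtain ⟨hγ0, hγ1⟩ := hγ
  have key : ∀ t : ℕ, Metric.infDist (ξ t) S ≤
      γ ^ t * Metric.infDist (ξ 0) S + t * C * γ ^ t / γ := by
    intro t
    induction t with
    | zero => simp
    | succ t ih =>
      have step : Metric.infDist (ξ (t + 1)) S ≤
          γ * Metric.infDist (ξ t) S + C * γ ^ t := by
        rw [hξ t]
        calc Metric.infDist (π (ξ t) + v t) S
            ≤ Metric.infDist (π (ξ t)) S + dist (π (ξ t) + v t) (π (ξ t)) :=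
              Metric.infDist_le_infDist_add_dist
          _ ≤ γ * Metric.infDist (ξ t) S + C * γ ^ t := by
              gcongr
              · exact hcontr _
              · rw [dist_eq_norm]; simpa using hv t
      calc Metric.infDist (ξ (t + 1)) S
          ≤ γ * Metric.infDist (ξ t) S + C * γ ^ t := step
        _ ≤ γ * (γ ^ t * Metric.infDist (ξ 0) S + t * C * γ ^ t / γ) + C * γ ^ t := by
            gcongr
        _ = γ ^ (t + 1) * Metric.infDist (ξ 0) S + ((t:ℝ) + 1) * C * γ ^ (t + 1) / γ := by
            field_simp
            ring
        _ = γ ^ (t + 1) * Metric.infDist (ξ 0) S + ((t + 1 : ℕ) : ℝ) * C * γ ^ (t + 1) / γ := by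
            push_cast
            ring
  intro t _
  -- done
  have := key t
  calc Metric.infDist (ξ t) S ≤ γ ^ t * Metric.infDist (ξ 0) S + t * C * γ ^ t / γ := this
    _ = γ ^ t * (Metric.infDist (ξ 0) S + C * t / γ) := by field_simp
end

section
/- Subsampling lemma: Suppose dist(ξ_{Nk}, S) ≤ q(k)·ρ^k for all k ∈ ℕ, and the intermediate iterates satisfy dist(ξ_{Nk+s}, S) ≤ p(s)γ^s·dist(ξ_{Nk}, S) for all s ∈ {0,…,N−1}, where p, q are positive non-decreasing polynomials, ρ ∈ (0,1), γ ∈ (0,1), and N ≥ 1. Then there exists a polynomial r such that dist(ξ_t, S) ≤ r(t)·(ρ^{1/N})^t for all t ∈ ℕ. -/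
theorem stmt_17 {X : Type*} [MetricSpace X] (ξ : ℕ → X) (S : Set X)
    (hSne : S.Nonempty) (p q : Polynomial ℝ) (γ ρ : ℝ)
    (hγ : γ ∈ Set.Ioo (0:ℝ) 1) (hρ : ρ ∈ Set.Ioo (0:ℝ) 1)
    (N : ℕ) (hN : 1 ≤ N)
    (hppos : ∀ t : ℕ, 0 < p.eval (t : ℝ))
    (hqpos : ∀ t : ℕ, 0 < q.eval (t : ℝ))
    (hpmono : ∀ s t : ℕ, s ≤ t → p.eval (s : ℝ) ≤ p.eval (t : ℝ))
    (hqmono : ∀ s t : ℕ, s ≤ t → q.eval (s : ℝ) ≤ q.eval (t : ℝ))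
    (hq : ∀ k : ℕ, Metric.infDist (ξ (N * k)) S ≤ q.eval (k : ℝ) * ρ ^ k)
    (hp : ∀ (k s : ℕ), s < N →
      Metric.infDist (ξ (N * k + s)) S ≤
        p.eval (s : ℝ) * γ ^ s * Metric.infDist (ξ (N * k)) S) :
    ∃ r : Polynomial ℝ, ∀ t : ℕ,
      Metric.infDist (ξ t) S ≤ r.eval (t : ℝ) * (ρ ^ ((1 : ℝ) / N)) ^ t := by
  obtain ⟨hγ0, hγ1⟩ := hγ
  obtain ⟨hρ0, hρ1⟩ := hρ
  refine ⟨(p.eval (N:ℝ) / ρ) • q, fun t => ?_⟩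
  obtain ⟨k, s, hs, rfl⟩ : ∃ k s, s < N ∧ t = N * k + s :=
    ⟨t / N, t % N, Nat.mod_lt _ (by omega), (Nat.div_add_mod t N).symm⟩
  have h1 := hp k s hs
  have h2 := hq k
  have hd0 : 0 ≤ Metric.infDist (ξ (N*k)) S := Metric.infDist_nonneg
  have hγs : γ ^ s ≤ 1 := pow_le_one₀ hγ0.le hγ1.le
  have hγs0 : 0 < γ ^ s := pow_pos hγ0 s
  have hps : p.eval (s:ℝ) * γ ^ s ≤ p.eval (N:ℝ) := by
    have h := hpmono s N hs.le
    nlinarith [hppos s]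
  have hqk : q.eval ((k:ℕ):ℝ) ≤ q.eval (((N*k+s : ℕ)):ℝ) :=
    hqmono k (N*k+s) (by nlinarith)
  have hρN : (0:ℝ) < p.eval (N:ℝ) := by
    have := hppos N; simpa using this
  have hρk : ρ ^ k ≤ ρ⁻¹ * (ρ ^ ((1:ℝ)/N)) ^ (N*k+s) := by
    have hexp : (ρ ^ ((1:ℝ)/N)) ^ (N*k+s) = ρ ^ (((N*k+s : ℕ):ℝ) / N) := by
      rw [← Real.rpow_natCast (ρ ^ ((1:ℝ)/N)) (N*k+s), ← Real.rpow_mul hρ0.le]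
      ring_nf
    rw [hexp]
    have hkn : ρ ^ k = ρ ^ ((k:ℕ):ℝ) := (Real.rpow_natCast ρ k).symm
    rw [hkn]
    have hN0 : (0:ℝ) < N := by exact_mod_cast hN
    have hle : ((N*k+s : ℕ):ℝ) / N ≤ (k:ℝ) + 1 := by
      rw [div_le_iff₀ hN0]
      push_cast
      nlinarith [hs.le, (Nat.cast_le (α := ℝ)).2 hs.le]
    have := Real.rpow_le_rpow_of_exponent_ge hρ0 hρ1.le hle
    have hadd : ρ ^ ((k:ℝ) + 1) = ρ ^ ((k:ℕ):ℝ) * ρ := by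
      rw [Real.rpow_add hρ0]; simp
    rw [hadd] at this
    rw [le_inv_mul_iff₀ hρ0] at *
    linarith [mul_comm ρ (ρ ^ ((k:ℕ):ℝ))]
  have hρkpos : (0:ℝ) < ρ ^ k := pow_pos hρ0 k
  have hqkpos := hqpos k
  have hqtpos := hqpos (N*k+s)
  have hrpos : (0:ℝ) < (ρ ^ ((1:ℝ)/N)) ^ (N*k+s) :=
    pow_pos (Real.rpow_pos_of_pos hρ0 _) _
  have step : Metric.infDist (ξ (N*k+s)) S ≤ p.eval (N:ℝ) * (q.eval (((N*k+s:ℕ)):ℝ) * (ρ⁻¹ * (ρ ^ ((1:ℝ)/N)) ^ (N*k+s))) := by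
    calc Metric.infDist (ξ (N*k+s)) S
        ≤ p.eval (s:ℝ) * γ ^ s * Metric.infDist (ξ (N*k)) S := h1
      _ ≤ p.eval (N:ℝ) * Metric.infDist (ξ (N*k)) S := by nlinarith
      _ ≤ p.eval (N:ℝ) * (q.eval ((k:ℕ):ℝ) * ρ ^ k) := by nlinarith
      _ ≤ p.eval (N:ℝ) * (q.eval (((N*k+s:ℕ)):ℝ) * (ρ⁻¹ * (ρ ^ ((1:ℝ)/N)) ^ (N*k+s))) := by
          exact mul_le_mul_of_nonneg_left (mul_le_mul hqk hρk hρkpos.le hqtpos.le) hρN.le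
  refine step.trans (le_of_eq ?_)
  simp [Polynomial.eval_smul, smul_eq_mul]
  field_simp
end
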